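/- arXiv:1811.02709 — 2 statements merged into one kernel-verified Lean document; each statement's English description precedes it below -/
import Mathlib

section
/- (Morrey-to-L^∞ heat semigroup estimate) Let N ≥ 1 and 1 ≤ q₁ ≤ q < ∞. Then there exists a constant C > 0, depending only on N, q and q₁, such that ‖e^{tΔ} f‖_{L^∞} ≤ C t^{−N/(2q)} ‖f‖_{M^q_{q₁}} for all t > 0 and all f ∈ M^q_{q₁}(ℝ^N). -/
open MeasureTheory ENNReal

noncomputable section

/-- `ℝ^N` with the Euclidean structure. -/
abbrev Euc (N : ℕ) : Type := EuclideanSpace ℝ (Fin N)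

/-- The Morrey norm `‖f‖_{M^p_{p₁}}`. -/
noncomputable def morreyNorm (N : ℕ) (p p₁ : ℝ≥0∞) {F : Type*} [NormedAddCommGroup F]
    (f : Euc N → F) : ℝ≥0∞ :=
  ⨆ (x₀ : Euc N) (R : ℝ) (_ : 0 < R),
    ENNReal.ofReal (R ^ ((N : ℝ) / p.toReal - (N : ℝ) / p₁.toReal)) *
      eLpNorm f p₁ (volume.restrict (Metric.closedBall x₀ R))

/-- The Gaussian heat kernel on `ℝ^N`. -/
noncomputable def heatKernel (N : ℕ) (t : ℝ) (x : Euc N) : ℝ :=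
  (4 * Real.pi * t) ^ (-(N : ℝ) / 2) * Real.exp (-‖x‖ ^ 2 / (4 * t))

/-- The heat semigroup `e^{tΔ}` acting by convolution with the Gaussian heat kernel. -/
noncomputable def heatSemigroup (N : ℕ) (t : ℝ) {F : Type*} [NormedAddCommGroup F]
    [NormedSpace ℝ F] (f : Euc N → F) : Euc N → F :=
  fun x => ∫ y, heatKernel N t (x - y) • f y

/-!
Split `ℝ^N` around `z` into the shells `j√(4t) ≤ |z - y| < (j + 1)√(4t)`. On the `j`-th shell
the Gaussian is at most `e^{-j²}`, while Hölder's inequality and the Morrey norm bound the `L¹`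
mass of `f` on the ball of radius `R = (j + 1)√(4t)` by `R^{N - N/q} ‖f‖_{M^q_{q₁}}`. The
super-exponential decay of `e^{-j²}` beats the polynomial growth of `(j + 1)^{N - N/q}`, and
`(4πt)^{-N/2} · t^{(N - N/q)/2} = (4π)^{-N/2} t^{-N/(2q)}` gives the rate.
-/

open Real Metric Filter Asymptotics

section Morrey
variable {N : ℕ} {p p₁ : ℝ≥0∞} {F : Type*} [NormedAddCommGroup F] {f : Euc N → F}

lemma eLpNorm_restrict_closedBall_le_morreyNorm (x : Euc N) {R : ℝ} (hR : 0 < R) :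
    eLpNorm f p₁ (volume.restrict (closedBall x R)) ≤
      ENNReal.ofReal (R ^ ((N : ℝ) / p₁.toReal - (N : ℝ) / p.toReal)) * morreyNorm N p p₁ f := by
  set a := (N : ℝ) / p₁.toReal - (N : ℝ) / p.toReal
  have hball : ENNReal.ofReal (R ^ (-a)) * eLpNorm f p₁ (volume.restrict (closedBall x R)) ≤
      morreyNorm N p p₁ f := by
    rw [neg_sub]
    exact le_iSup_of_le x (le_iSup_of_le R (le_iSup_of_le hR le_rfl))
  calc eLpNorm f p₁ (volume.restrict (closedBall x R))
      = ENNReal.ofReal (R ^ a) * (ENNReal.ofReal (R ^ (-a)) *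
          eLpNorm f p₁ (volume.restrict (closedBall x R))) := by
        rw [← mul_assoc, ← ENNReal.ofReal_mul (by positivity), ← rpow_add hR, add_neg_cancel,
          Real.rpow_zero, ENNReal.ofReal_one, one_mul]
    _ ≤ _ := by gcongr

lemma volume_closedBall_rpow (x : Euc N) {R γ : ℝ} (hR : 0 ≤ R) (hγ : 0 ≤ γ) :
    volume (closedBall x R) ^ γ =
      ENNReal.ofReal (R ^ ((N : ℝ) * γ)) * volume (ball (0 : Euc N) 1) ^ γ := by
  rw [Measure.addHaar_closedBall volume x hR, finrank_euclideanSpace_fin,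
    ENNReal.mul_rpow_of_nonneg _ _ hγ, ENNReal.ofReal_rpow_of_nonneg (by positivity) hγ,
    ← Real.rpow_natCast, ← Real.rpow_mul hR]

lemma lintegral_enorm_closedBall_le_morreyNorm (hp₁ : 1 ≤ p₁)
    (hf : AEStronglyMeasurable f volume) (x : Euc N) {R : ℝ} (hR : 0 < R) :
    ∫⁻ y in closedBall x R, ‖f y‖ₑ ≤
      ENNReal.ofReal (R ^ ((N : ℝ) - (N : ℝ) / p.toReal)) *
        volume (ball (0 : Euc N) 1) ^ (1 - 1 / p₁.toReal) * morreyNorm N p p₁ f := by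
  have hγ : 0 ≤ 1 - 1 / p₁.toReal := by
    rcases eq_or_ne p₁ ⊤ with rfl | hp₁top
    · simp
    · have : 1 ≤ p₁.toReal := by simpa using ENNReal.toReal_mono hp₁top hp₁
      simpa using inv_le_one_of_one_le₀ this
  have holder := eLpNorm_le_eLpNorm_mul_rpow_measure_univ hp₁ hf.restrict
    (μ := volume.restrict (closedBall x R))
  rw [eLpNorm_one_eq_lintegral_enorm, Measure.restrict_apply_univ, toReal_one, div_one,
    volume_closedBall_rpow x hR.le hγ] at holder
  calc ∫⁻ y in closedBall x R, ‖f y‖ₑ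
      ≤ ENNReal.ofReal (R ^ ((N : ℝ) / p₁.toReal - (N : ℝ) / p.toReal)) * morreyNorm N p p₁ f *
          (ENNReal.ofReal (R ^ ((N : ℝ) * (1 - 1 / p₁.toReal))) *
            volume (ball (0 : Euc N) 1) ^ (1 - 1 / p₁.toReal)) :=
        holder.trans (by gcongr; exact eLpNorm_restrict_closedBall_le_morreyNorm x hR)
    _ = _ := by
        rw [mul_comm _ (morreyNorm N p p₁ f), mul_assoc, ← mul_assoc (ENNReal.ofReal _),
          ← ENNReal.ofReal_mul (by positivity), ← rpow_add hR]
        ring_nf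
end Morrey

def gaussianBallSum (α : ℝ) : ℝ := ∑' j : ℕ, exp (-(j : ℝ) ^ 2) * ((j : ℝ) + 1) ^ α

lemma summable_exp_neg_sq_mul_rpow (α : ℝ) :
    Summable fun j : ℕ => exp (-(j : ℝ) ^ 2) * ((j : ℝ) + 1) ^ α := by
  have hshift : Tendsto (fun j : ℕ => (j : ℝ) + 1) atTop atTop :=
    tendsto_atTop_add_const_right _ 1 tendsto_natCast_atTop_atTop
  have hdecay := ((rpow_mul_exp_neg_mul_sq_isLittleO_exp_neg (b := 1 / 2) (by norm_num)
    α).comp_tendsto hshift).isBigO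
  refine summable_of_isBigO_nat (summable_exp_nat_mul_of_ge (f := fun j : ℕ => (j : ℝ) + 1)
    (by norm_num) fun j => by simp)
    ((IsBigO.of_bound (exp 1) (Eventually.of_forall fun j => ?_)).trans hdecay)
  have hj : -(j : ℝ) ^ 2 ≤ 1 + -(1 / 2) * ((j : ℝ) + 1) ^ 2 := by
    nlinarith [sq_nonneg ((j : ℝ) - 1)]
  simp only [Function.comp, norm_mul, norm_of_nonneg (exp_nonneg _),
    norm_of_nonneg (rpow_nonneg (by positivity : (0:ℝ) ≤ j + 1) α)]
  rw [mul_comm, mul_left_comm, ← exp_add]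
  exact mul_le_mul_of_nonneg_left (exp_le_exp.mpr hj) (by positivity)

lemma gaussianBallSum_pos (α : ℝ) : 0 < gaussianBallSum α :=
  (summable_exp_neg_sq_mul_rpow α).tsum_pos (fun j => by positivity) 0 (by simp)

lemma ofReal_exp_neg_sq_le_tsum_indicator {X : Type*} [PseudoMetricSpace X] (z y : X) {s : ℝ}
    (hs : 0 < s) :
    ENNReal.ofReal (exp (-(dist y z / s) ^ 2)) ≤
      ∑' j : ℕ, (closedBall z (((j : ℝ) + 1) * s)).indicator
        (fun _ => ENNReal.ofReal (exp (-(j : ℝ) ^ 2))) y := by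
  set j := ⌊dist y z / s⌋₊
  have hr : 0 ≤ dist y z / s := by positivity
  refine le_trans ?_ (ENNReal.le_tsum j)
  have hy : y ∈ closedBall z (((j : ℝ) + 1) * s) :=
    mem_closedBall.mpr ((div_le_iff₀ hs).mp (Nat.lt_floor_add_one _).le)
  rw [Set.indicator_of_mem hy]
  gcongr
  exact Nat.floor_le hr

section GaussianWeight
variable {X : Type*} [PseudoMetricSpace X] [MeasurableSpace X] [OpensMeasurableSpace X]
  {μ : Measure X} {g : X → ℝ≥0∞}

lemma lintegral_exp_neg_sq_dist_mul_le_tsum (hg : AEMeasurable g μ) (z : X) {s : ℝ}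
    (hs : 0 < s) :
    ∫⁻ y, ENNReal.ofReal (exp (-(dist y z / s) ^ 2)) * g y ∂μ ≤
      ∑' j : ℕ, ENNReal.ofReal (exp (-(j : ℝ) ^ 2)) *
        ∫⁻ y in closedBall z (((j : ℝ) + 1) * s), g y ∂μ := by
  calc ∫⁻ y, ENNReal.ofReal (exp (-(dist y z / s) ^ 2)) * g y ∂μ
      ≤ ∫⁻ y, ∑' j : ℕ, (closedBall z (((j : ℝ) + 1) * s)).indicator
          (fun y => ENNReal.ofReal (exp (-(j : ℝ) ^ 2)) * g y) y ∂μ := by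
        refine lintegral_mono fun y => ?_
        simp only [Set.indicator_mul_left, ENNReal.tsum_mul_right]
        gcongr
        exact ofReal_exp_neg_sq_le_tsum_indicator z y hs
    _ = _ := by
        rw [lintegral_tsum fun j => (hg.const_mul _).indicator measurableSet_closedBall]
        simp only [lintegral_indicator measurableSet_closedBall,
          lintegral_const_mul' _ _ ofReal_ne_top]

lemma lintegral_exp_neg_sq_dist_mul_le_of_ball_growth (hg : AEMeasurable g μ) (z : X) {s α : ℝ}
    (hs : 0 < s) {B : ℝ≥0∞}
    (hgrowth : ∀ R, 0 < R → ∫⁻ y in closedBall z R, g y ∂μ ≤ ENNReal.ofReal (R ^ α) * B) :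
    ∫⁻ y, ENNReal.ofReal (exp (-(dist y z / s) ^ 2)) * g y ∂μ ≤
      ENNReal.ofReal (gaussianBallSum α * s ^ α) * B := by
  calc _ ≤ _ := lintegral_exp_neg_sq_dist_mul_le_tsum hg z hs
    _ ≤ ∑' j : ℕ, ENNReal.ofReal (exp (-(j : ℝ) ^ 2)) *
          (ENNReal.ofReal ((((j : ℝ) + 1) * s) ^ α) * B) := by
        gcongr with j
        exact hgrowth _ (by positivity)
    _ = _ := by
        have hterm (j : ℕ) : ENNReal.ofReal (exp (-(j : ℝ) ^ 2)) *
            (ENNReal.ofReal ((((j : ℝ) + 1) * s) ^ α) * B) =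
            ENNReal.ofReal (exp (-(j : ℝ) ^ 2) * ((j : ℝ) + 1) ^ α) *
              ENNReal.ofReal (s ^ α) * B := by
          rw [mul_rpow (by positivity) hs.le, ENNReal.ofReal_mul (by positivity),
            ENNReal.ofReal_mul (exp_nonneg _)]
          ring
        rw [gaussianBallSum, tsum_congr hterm, ENNReal.tsum_mul_right, ENNReal.tsum_mul_right,
          ← ENNReal.ofReal_tsum_of_nonneg (fun j => by positivity) (summable_exp_neg_sq_mul_rpow α),
          ← ENNReal.ofReal_mul (tsum_nonneg fun j => by positivity)]
end GaussianWeight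

lemma heatKernel_sub_eq {N : ℕ} {t : ℝ} (ht : 0 < t) (z y : Euc N) :
    heatKernel N t (z - y) =
      (4 * π * t) ^ (-(N : ℝ) / 2) * exp (-(dist y z / (2 * √t)) ^ 2) := by
  rw [heatKernel, ← dist_eq_norm, dist_comm, div_pow, mul_pow, sq_sqrt ht.le]
  congr 2
  ring

lemma enorm_heatSemigroup_le_of_ball_growth {N : ℕ} {t : ℝ} (ht : 0 < t) {F : Type*}
    [NormedAddCommGroup F] [NormedSpace ℝ F] {f : Euc N → F} (hf : AEStronglyMeasurable f volume)
    (z : Euc N) {α : ℝ} {B : ℝ≥0∞}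
    (hgrowth : ∀ R, 0 < R → ∫⁻ y in closedBall z R, ‖f y‖ₑ ≤ ENNReal.ofReal (R ^ α) * B) :
    ‖heatSemigroup N t f z‖ₑ ≤
      ENNReal.ofReal ((4 * π * t) ^ (-(N : ℝ) / 2) * (gaussianBallSum α * (2 * √t) ^ α)) * B := by
  have hs : 0 < 2 * √t := by positivity
  calc ‖heatSemigroup N t f z‖ₑ ≤ ∫⁻ y, ‖heatKernel N t (z - y) • f y‖ₑ :=
        enorm_integral_le_lintegral_enorm _
    _ = ENNReal.ofReal ((4 * π * t) ^ (-(N : ℝ) / 2)) *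
          ∫⁻ y, ENNReal.ofReal (exp (-(dist y z / (2 * √t)) ^ 2)) * ‖f y‖ₑ := by
        rw [← lintegral_const_mul' _ _ ofReal_ne_top]
        congr 1 with y
        rw [enorm_smul, heatKernel_sub_eq ht, Real.enorm_eq_ofReal (by positivity),
          ENNReal.ofReal_mul (by positivity), mul_assoc]
    _ ≤ ENNReal.ofReal ((4 * π * t) ^ (-(N : ℝ) / 2)) *
          (ENNReal.ofReal (gaussianBallSum α * (2 * √t) ^ α) * B) := by
        gcongr
        exact lintegral_exp_neg_sq_dist_mul_le_of_ball_growth hf.enorm z hs hgrowth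
    _ = _ := by rw [← mul_assoc, ← ENNReal.ofReal_mul (by positivity)]

lemma heat_prefactor_scaling {N : ℕ} {q t : ℝ} (hq : q ≠ 0) (ht : 0 < t) (S : ℝ) :
    (4 * π * t) ^ (-(N : ℝ) / 2) * (S * (2 * √t) ^ ((N : ℝ) - N / q)) =
      (4 * π) ^ (-(N : ℝ) / 2) * 2 ^ ((N : ℝ) - N / q) * S * t ^ (-(N : ℝ) / (2 * q)) := by
  rw [mul_rpow (by positivity) ht.le, mul_rpow zero_le_two (sqrt_nonneg t), sqrt_eq_rpow,
    ← rpow_mul ht.le]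
  have ht_exp : t ^ (-(N : ℝ) / 2) * t ^ (1 / 2 * ((N : ℝ) - N / q)) =
      t ^ (-(N : ℝ) / (2 * q)) := by
    rw [← rpow_add ht]
    congr 1
    field_simp
    ring
  rw [← ht_exp]
  ring

theorem heat_semigroup_morrey_to_Linfty_general (N : ℕ) (q q₁ : ℝ)
    (hq₁ : 1 ≤ q₁) (hq₁q : q₁ ≤ q) :
    ∃ C > (0 : ℝ), ∀ (t : ℝ), 0 < t → ∀ f : Euc N → ℝ, Measurable f →
      morreyNorm N (ENNReal.ofReal q) (ENNReal.ofReal q₁) f ≠ ⊤ →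
      eLpNorm (heatSemigroup N t f) ⊤ volume ≤
        ENNReal.ofReal (C * t ^ (-(N : ℝ) / (2 * q))) *
          morreyNorm N (ENNReal.ofReal q) (ENNReal.ofReal q₁) f := by
  have hq : 0 < q := by linarith
  set α := (N : ℝ) - N / q with hα
  set κ := volume (ball (0 : Euc N) 1) ^ (1 - 1 / q₁)
  have hκ_ne_top : κ ≠ ⊤ := rpow_ne_top_of_nonneg
    (sub_nonneg.mpr ((div_le_one (by linarith)).mpr hq₁)) measure_ball_lt_top.ne
  have hκ_pos : 0 < κ.toReal := toReal_pos (rpow_pos (measure_ball_pos volume 0 one_pos)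
    measure_ball_lt_top.ne).ne' hκ_ne_top
  refine ⟨(4 * π) ^ (-(N : ℝ) / 2) * 2 ^ α * gaussianBallSum α * κ.toReal,
    by have := gaussianBallSum_pos α; positivity, fun t ht f hf _ => ?_⟩
  rw [eLpNorm_exponent_top]
  refine eLpNormEssSup_le_of_ae_enorm_bound (ae_of_all _ fun z => ?_)
  have hgrowth (R : ℝ) (hR : 0 < R) : ∫⁻ y in closedBall z R, ‖f y‖ₑ ≤
      ENNReal.ofReal (R ^ α) * (κ * morreyNorm N (ENNReal.ofReal q) (ENNReal.ofReal q₁) f) := by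
    rw [← mul_assoc]
    have h := lintegral_enorm_closedBall_le_morreyNorm (p := ENNReal.ofReal q)
      (one_le_ofReal.mpr hq₁) hf.aestronglyMeasurable z hR
    rwa [toReal_ofReal hq.le, toReal_ofReal (by linarith)] at h
  calc _ ≤ _ := enorm_heatSemigroup_le_of_ball_growth ht hf.aestronglyMeasurable z hgrowth
    _ = _ := by
      rw [heat_prefactor_scaling hq.ne' ht, ← hα, ← ofReal_toReal hκ_ne_top,
        toReal_ofReal hκ_pos.le, ← mul_assoc, ← ENNReal.ofReal_mul (by have := gaussianBallSum_pos α; positivity)]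
      congr 2
      ring

/-- **Morrey-to-`L^∞` heat semigroup estimate.** For `1 ≤ q₁ ≤ q < ∞`, there is `C > 0`
depending only on `N, q, q₁` such that `‖e^{tΔ} f‖_{L^∞} ≤ C t^{−N/(2q)} ‖f‖_{M^q_{q₁}}`
for all `t > 0` and `f ∈ M^q_{q₁}(ℝ^N)`. -/
theorem heat_semigroup_morrey_to_Linfty (N : ℕ) (hN : 1 ≤ N) (q q₁ : ℝ)
    (hq₁ : 1 ≤ q₁) (hq₁q : q₁ ≤ q) :
    ∃ C > (0 : ℝ), ∀ (t : ℝ), 0 < t → ∀ f : Euc N → ℝ, Measurable f →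
      morreyNorm N (ENNReal.ofReal q) (ENNReal.ofReal q₁) f ≠ ⊤ →
      eLpNorm (heatSemigroup N t f) ⊤ volume ≤
        ENNReal.ofReal (C * t ^ (-(N : ℝ) / (2 * q))) *
          morreyNorm N (ENNReal.ofReal q) (ENNReal.ofReal q₁) f :=
  heat_semigroup_morrey_to_Linfty_general N q q₁ hq₁ hq₁q
end
end

section
/- (Morrey-to-L^∞ gradient heat semigroup estimate) Let N ≥ 1 and 1 ≤ q₁ ≤ q < ∞. Then there exists a constant C > 0, depending only on N, q and q₁, such that for every first-order spatial derivative ∂_x, ‖∂_x e^{tΔ} f‖_{L^∞} ≤ C t^{−N/(2q) − 1/2} ‖f‖_{M^q_{q₁}} for all t > 0 and all f ∈ M^q_{q₁}(ℝ^N). -/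
/-!
The derivative is controlled through difference quotients at scales `h ≤ √t`: by the mean value
theorem the kernel increment `G(z + h e) - G(z)` is at most `h t^(-(N+1)/2)` times a Gaussian of
twice the width, so everything reduces to the Gaussian averages `∫ exp (-|x - y|² / 16t) |f y| dy`.
Covering that Gaussian by the dyadic balls of radius `2^(k+1) · 4√t`, on each of which Hölder's
inequality and the Morrey norm give `∫_{B_R} |f| ≤ R^(N - N/q) ‖f‖`, bounds the average by
`t^((N - N/q)/2) ‖f‖`; the dyadic series converges because the Gaussian decays like `exp (-4^k)`.
-/

open MeasureTheory ENNReal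

noncomputable section

/-- First-order partial derivative `∂_i` (directional derivative along the `i`-th
coordinate vector). -/
noncomputable def pderiv' (N : ℕ) (i : Fin N) {F : Type*} [NormedAddCommGroup F]
    [NormedSpace ℝ F] (g : Euc N → F) : Euc N → F :=
  fun x => fderiv ℝ g x (EuclideanSpace.single i 1)

open Metric Set Real Filter Topology

theorem exists_le_two_pow_succ_and_four_pow_le (u : ℝ) :
    ∃ k : ℕ, u ≤ 2 ^ (k + 1) ∧ (4 : ℝ) ^ k ≤ u ^ 2 + 1 := by
  rcases lt_or_ge u 1 with hu1 | hu1
  · exact ⟨0, by norm_num; linarith, by norm_num; positivity⟩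
  obtain ⟨k, hk, hk'⟩ := exists_nat_pow_near hu1 one_lt_two
  refine ⟨k, hk'.le, ?_⟩
  calc (4 : ℝ) ^ k = (2 ^ k) ^ 2 := by rw [← pow_mul, mul_comm, pow_mul]; norm_num
    _ ≤ u ^ 2 := by gcongr
    _ ≤ u ^ 2 + 1 := by linarith

theorem ofReal_exp_neg_sq_div_le_tsum_indicator {E : Type*} [PseudoMetricSpace E] (x y : E)
    {s : ℝ} (hs : 0 < s) :
    ENNReal.ofReal (exp (-dist x y ^ 2 / s)) ≤
      ∑' k : ℕ, (closedBall x (2 ^ (k + 1) * √s)).indicator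
        (fun _ ↦ ENNReal.ofReal (exp (1 - 4 ^ k))) y := by
  have hsqrt : 0 < √s := sqrt_pos.mpr hs
  obtain ⟨k, hk, hk'⟩ :=
    exists_le_two_pow_succ_and_four_pow_le (dist x y / √s)
  refine le_trans ?_ (ENNReal.le_tsum k)
  have hy : y ∈ closedBall x (2 ^ (k + 1) * √s) := by
    rwa [mem_closedBall, dist_comm, ← div_le_iff₀ hsqrt]
  rw [indicator_of_mem hy]
  gcongr
  rw [div_pow, sq_sqrt hs.le] at hk'
  rw [neg_div]
  linarith

-- `exp (1 - 4 ^ k)` bounds the Gaussian `exp (-u²)` on `u ≥ 2 ^ k` (and on `u < 1` for `k = 0`),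
-- and `(2 ^ (k + 1)) ^ a` is the growth of the integral over the `k`-th dyadic ball.
def dyadicGaussWeight (a : ℝ) (k : ℕ) : ℝ := exp (1 - 4 ^ k) * (2 ^ (k + 1)) ^ a

theorem dyadicGaussWeight_pos (a : ℝ) (k : ℕ) : 0 < dyadicGaussWeight a k := by
  unfold dyadicGaussWeight; positivity

theorem summable_dyadicGaussWeight (a : ℝ) : Summable (dyadicGaussWeight a) := by
  refine summable_of_ratio_test_tendsto_lt_one zero_lt_one
    (Eventually.of_forall fun k ↦ (dyadicGaussWeight_pos a k).ne') ?_
  have hratio : ∀ k : ℕ, ‖dyadicGaussWeight a (k + 1)‖ / ‖dyadicGaussWeight a k‖ =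
      exp (-(3 * 4 ^ k)) * 2 ^ a := by
    intro k
    rw [norm_of_nonneg (dyadicGaussWeight_pos a _).le,
      norm_of_nonneg (dyadicGaussWeight_pos a _).le, div_eq_iff (dyadicGaussWeight_pos a k).ne']
    simp only [dyadicGaussWeight]
    rw [pow_succ 2 (k + 1), mul_rpow (by positivity) zero_le_two, pow_succ 4 k,
      show (1 : ℝ) - 4 ^ k * 4 = -(3 * 4 ^ k) + (1 - 4 ^ k) by ring, exp_add]
    ring
  simp_rw [hratio]
  have hexp : Tendsto (fun k : ℕ ↦ exp (-(3 * 4 ^ k))) atTop (𝓝 0) :=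
    tendsto_exp_atBot.comp <| tendsto_neg_atTop_atBot.comp <|
      (tendsto_pow_atTop_atTop_of_one_lt (by norm_num : (1 : ℝ) < 4)).const_mul_atTop
        (by norm_num)
  simpa using hexp.mul_const ((2 : ℝ) ^ a)

def dyadicGaussSum (a : ℝ) : ℝ := ∑' k, dyadicGaussWeight a k

theorem dyadicGaussSum_pos (a : ℝ) : 0 < dyadicGaussSum a :=
  (summable_dyadicGaussWeight a).tsum_pos (fun k ↦ (dyadicGaussWeight_pos a k).le) 0
    (dyadicGaussWeight_pos a 0)

theorem lintegral_exp_neg_sq_div_mul_le {E : Type*} [PseudoMetricSpace E] [MeasurableSpace E]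
    [OpensMeasurableSpace E] {μ : Measure E} {g : E → ℝ≥0∞} (hg : AEMeasurable g μ) (x : E)
    {a : ℝ} {A : ℝ≥0∞}
    (hball : ∀ R > 0, ∫⁻ y in closedBall x R, g y ∂μ ≤ ENNReal.ofReal (R ^ a) * A)
    {s : ℝ} (hs : 0 < s) :
    ∫⁻ y, ENNReal.ofReal (exp (-dist x y ^ 2 / s)) * g y ∂μ ≤
      ENNReal.ofReal (dyadicGaussSum a * s ^ (a / 2)) * A := by
  set B : ℕ → Set E := fun k ↦ closedBall x (2 ^ (k + 1) * √s)
  have hpoint : ∀ y, ENNReal.ofReal (exp (-dist x y ^ 2 / s)) * g y ≤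
      ∑' k, (B k).indicator (fun y ↦ ENNReal.ofReal (exp (1 - 4 ^ k)) * g y) y := by
    intro y
    calc _ ≤ (∑' k : ℕ, (B k).indicator (fun _ ↦ ENNReal.ofReal (exp (1 - 4 ^ k))) y) * g y :=
          by gcongr; exact ofReal_exp_neg_sq_div_le_tsum_indicator x y hs
      _ = _ := by
          rw [← ENNReal.tsum_mul_right]
          simp_rw [Set.indicator_mul_left]
  calc ∫⁻ y, ENNReal.ofReal (exp (-dist x y ^ 2 / s)) * g y ∂μ
      ≤ ∑' k, ∫⁻ y, (B k).indicator (fun y ↦ ENNReal.ofReal (exp (1 - 4 ^ k)) * g y) y ∂μ := by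
        rw [← lintegral_tsum fun k ↦ (hg.const_mul _).indicator measurableSet_closedBall]
        exact lintegral_mono hpoint
    _ ≤ ∑' k, ENNReal.ofReal (dyadicGaussWeight a k * s ^ (a / 2)) * A := by
        gcongr with k
        rw [lintegral_indicator measurableSet_closedBall, lintegral_const_mul'' _ hg.restrict]
        calc _ ≤ ENNReal.ofReal (exp (1 - 4 ^ k)) *
              (ENNReal.ofReal ((2 ^ (k + 1) * √s) ^ a) * A) := by
              gcongr; exact hball _ (by positivity)
          _ = _ := by
              rw [← mul_assoc, ← ENNReal.ofReal_mul (by positivity),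
                mul_rpow (by positivity) (sqrt_nonneg s), sqrt_eq_rpow, ← rpow_mul hs.le,
                dyadicGaussWeight, one_div_mul_eq_div, mul_assoc]
    _ = _ := by
        rw [ENNReal.tsum_mul_right, ← ENNReal.ofReal_tsum_of_nonneg
          (fun k ↦ by have := dyadicGaussWeight_pos a k; positivity)
          ((summable_dyadicGaussWeight a).mul_right _), tsum_mul_right, dyadicGaussSum]

section Morrey

variable {N : ℕ} {F : Type*} [NormedAddCommGroup F] {p p₁ : ℝ≥0∞} {f : Euc N → F}

theorem ofReal_rpow_mul_eLpNorm_closedBall_le_morreyNorm (x : Euc N) {R : ℝ} (hR : 0 < R) :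
    ENNReal.ofReal (R ^ ((N : ℝ) / p.toReal - N / p₁.toReal)) *
      eLpNorm f p₁ (volume.restrict (closedBall x R)) ≤ morreyNorm N p p₁ f :=
  le_iSup₂_of_le x R (le_iSup_of_le hR le_rfl)

theorem lintegral_closedBall_enorm_le_morreyNorm (hp₁ : 1 ≤ p₁)
    (hf : AEStronglyMeasurable f) (x : Euc N) {R : ℝ} (hR : 0 < R) :
    ∫⁻ y in closedBall x R, ‖f y‖ₑ ≤ ENNReal.ofReal (R ^ ((N : ℝ) - N / p.toReal)) *
      (volume (ball (0 : Euc N) 1) ^ (1 - 1 / p₁.toReal) * morreyNorm N p p₁ f) := by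
  set M := morreyNorm N p p₁ f
  set V := volume (ball (0 : Euc N) 1)
  have hV : V ≠ ⊤ := measure_ball_lt_top.ne
  have hlocal : eLpNorm f p₁ (volume.restrict (closedBall x R)) ≤
      ENNReal.ofReal (R ^ ((N : ℝ) / p₁.toReal - N / p.toReal)) * M := by
    calc eLpNorm f p₁ (volume.restrict (closedBall x R))
        = ENNReal.ofReal (R ^ ((N : ℝ) / p₁.toReal - N / p.toReal)) *
            (ENNReal.ofReal (R ^ ((N : ℝ) / p.toReal - N / p₁.toReal)) *
              eLpNorm f p₁ (volume.restrict (closedBall x R))) := by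
          rw [← mul_assoc, ← ENNReal.ofReal_mul (by positivity), ← rpow_add hR]
          simp
      _ ≤ _ := by gcongr; exact ofReal_rpow_mul_eLpNorm_closedBall_le_morreyNorm x hR
  have holder := eLpNorm_le_eLpNorm_mul_rpow_measure_univ hp₁ (hf.restrict (s := closedBall x R))
  rw [eLpNorm_one_eq_lintegral_enorm, Measure.restrict_apply_univ,
    Measure.addHaar_closedBall _ _ hR.le, finrank_euclideanSpace_fin] at holder
  calc ∫⁻ y in closedBall x R, ‖f y‖ₑ
      ≤ ENNReal.ofReal (R ^ ((N : ℝ) / p₁.toReal - N / p.toReal)) * M *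
          (ENNReal.ofReal (R ^ N) * V) ^ (1 / (1 : ℝ≥0∞).toReal - 1 / p₁.toReal) :=
        holder.trans (by gcongr)
    _ = _ := by
      rw [ENNReal.mul_rpow_of_ne_top ENNReal.ofReal_ne_top hV,
        ENNReal.ofReal_rpow_of_pos (by positivity), ← Real.rpow_natCast, ← rpow_mul hR.le]
      calc _ = ENNReal.ofReal (R ^ ((N : ℝ) / p₁.toReal - N / p.toReal)) *
            ENNReal.ofReal (R ^ ((N : ℝ) * (1 - 1 / p₁.toReal))) *
              (V ^ (1 - 1 / p₁.toReal) * M) := by simp only [toReal_one, div_one]; ring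
        _ = _ := by
          rw [← ENNReal.ofReal_mul (by positivity), ← rpow_add hR]
          congr 3
          ring

theorem lintegral_exp_neg_sq_div_mul_le_morreyNorm (hp₁ : 1 ≤ p₁) (hf : AEStronglyMeasurable f)
    (x : Euc N) {s : ℝ} (hs : 0 < s) :
    ∫⁻ y, ENNReal.ofReal (exp (-‖x - y‖ ^ 2 / s)) * ‖f y‖ₑ ≤
      ENNReal.ofReal (dyadicGaussSum (N - N / p.toReal) * s ^ ((N - N / p.toReal) / 2)) *
        (volume (ball (0 : Euc N) 1) ^ (1 - 1 / p₁.toReal) * morreyNorm N p p₁ f) := by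
  simpa only [dist_eq_norm] using lintegral_exp_neg_sq_div_mul_le hf.enorm x
    (fun R hR ↦ lintegral_closedBall_enorm_le_morreyNorm hp₁ hf x hR) hs

end Morrey

section HeatKernel

variable {N : ℕ} {t : ℝ}

theorem continuous_heatKernel (N : ℕ) (t : ℝ) : Continuous (heatKernel N t) := by
  unfold heatKernel; fun_prop

theorem heatKernel_nonneg (ht : 0 ≤ t) (z : Euc N) : 0 ≤ heatKernel N t z := by
  unfold heatKernel; positivity

theorem heatKernel_le (ht : 0 < t) (z : Euc N) :
    heatKernel N t z ≤ (4 * π * t) ^ (-(N : ℝ) / 2) * exp (-‖z‖ ^ 2 / (16 * t)) := by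
  unfold heatKernel
  gcongr _ * exp ?_
  rw [div_le_div_iff₀ (by positivity) (by positivity)]
  nlinarith [sq_nonneg ‖z‖]

theorem hasDerivAt_heatKernel_add_smul (z v : Euc N) (s : ℝ) (ht : t ≠ 0) :
    HasDerivAt (fun s : ℝ ↦ heatKernel N t (z + s • v))
      (heatKernel N t (z + s • v) * (-inner ℝ (z + s • v) v / (2 * t))) s := by
  have hline : HasDerivAt (fun s : ℝ ↦ z + s • v) v s := by
    simpa using ((hasDerivAt_id s).smul_const v).const_add z
  have harg : HasDerivAt (fun s : ℝ ↦ -‖z + s • v‖ ^ 2 / (4 * t))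
      (-(2 * inner ℝ (z + s • v) v) / (4 * t)) s := by
    simpa [neg_div] using hline.norm_sq.neg.div_const (4 * t)
  refine (harg.exp.const_mul ((4 * π * t) ^ (-(N : ℝ) / 2))).congr_deriv ?_
  simp only [heatKernel]
  field_simp
  ring

theorem mul_exp_neg_sq_div_le {X : ℝ} (hX : 0 ≤ X) (ht : 0 < t) :
    X * exp (-X ^ 2 / (8 * t)) ≤ 2 * √t := by
  have hsq : (X * exp (-X ^ 2 / (8 * t))) ^ 2 ≤ (2 * √t) ^ 2 := by
    rw [mul_pow, mul_pow, sq_sqrt ht.le, ← exp_nat_mul]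
    calc X ^ 2 * exp (2 * (-X ^ 2 / (8 * t)))
        = 4 * t * (X ^ 2 / (4 * t) * exp (-(X ^ 2 / (4 * t)))) := by
          rw [show 2 * (-X ^ 2 / (8 * t)) = -(X ^ 2 / (4 * t)) by ring]
          field_simp
      _ ≤ 4 * t * exp (-1) := by gcongr; exact mul_exp_neg_le_exp_neg_one _
      _ ≤ 2 ^ 2 * t := by
          nlinarith [exp_le_one_iff.mpr (by norm_num : (-1 : ℝ) ≤ 0)]
  exact (pow_le_pow_iff_left₀ (by positivity) (by positivity) two_ne_zero).mp hsq

theorem exp_neg_sq_div_le_of_le_add_sqrt {X Z : ℝ} (hZ : 0 ≤ Z) (hZX : Z ≤ X + √t) (ht : 0 < t) :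
    exp (-X ^ 2 / (8 * t)) ≤ exp (1 / 8) * exp (-Z ^ 2 / (16 * t)) := by
  rw [← exp_add, exp_le_exp, div_add_div _ _ (by norm_num) (by positivity),
    div_le_div_iff₀ (by positivity) (by positivity)]
  have hsqrt : √t ^ 2 = t := sq_sqrt ht.le
  nlinarith [sq_nonneg (X - √t), sqrt_nonneg t, mul_le_mul hZX hZX hZ (by linarith)]

theorem abs_heatKernel_mul_inner_le (ht : 0 < t) (w v : Euc N) (hv : ‖v‖ ≤ 1) :
    |heatKernel N t w * (-inner ℝ w v / (2 * t))| ≤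
      (4 * π * t) ^ (-(N : ℝ) / 2) / √t * exp (-‖w‖ ^ 2 / (8 * t)) := by
  have hinner : |inner ℝ w v| ≤ ‖w‖ :=
    (abs_real_inner_le_norm w v).trans (mul_le_of_le_one_right (norm_nonneg w) hv)
  have hsplit : exp (-‖w‖ ^ 2 / (4 * t)) =
      exp (-‖w‖ ^ 2 / (8 * t)) * exp (-‖w‖ ^ 2 / (8 * t)) := by
    rw [← exp_add]; congr 1; field_simp; ring
  rw [abs_mul, abs_of_nonneg (heatKernel_nonneg ht.le w), abs_div, abs_neg,
    abs_of_pos (by positivity : 0 < 2 * t)]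
  calc heatKernel N t w * (|inner ℝ w v| / (2 * t))
      ≤ heatKernel N t w * (‖w‖ / (2 * t)) :=
        mul_le_mul_of_nonneg_left (by gcongr) (heatKernel_nonneg ht.le w)
    _ = (4 * π * t) ^ (-(N : ℝ) / 2) * exp (-‖w‖ ^ 2 / (8 * t)) *
          (‖w‖ * exp (-‖w‖ ^ 2 / (8 * t))) / (2 * t) := by
        rw [heatKernel, hsplit]
        ring
    _ ≤ (4 * π * t) ^ (-(N : ℝ) / 2) * exp (-‖w‖ ^ 2 / (8 * t)) * (2 * √t) / (2 * t) := by
        gcongr (4 * π * t) ^ (-(N : ℝ) / 2) * exp (-‖w‖ ^ 2 / (8 * t)) * ?_ / (2 * t)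
        exact mul_exp_neg_sq_div_le (norm_nonneg w) ht
    _ = _ := by
        field_simp
        rw [sq_sqrt ht.le]

theorem abs_heatKernel_add_smul_sub_le (ht : 0 < t) (z v : Euc N) (hv : ‖v‖ ≤ 1) {h : ℝ}
    (hh₀ : 0 ≤ h) (hh : h ≤ √t) :
    |heatKernel N t (z + h • v) - heatKernel N t z| ≤
      h * (exp (1 / 8) * (4 * π * t) ^ (-(N : ℝ) / 2) / √t * exp (-‖z‖ ^ 2 / (16 * t))) := by
  have hderiv_le : ∀ s ∈ Ico 0 h,
      ‖heatKernel N t (z + s • v) * (-inner ℝ (z + s • v) v / (2 * t))‖ ≤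
        exp (1 / 8) * (4 * π * t) ^ (-(N : ℝ) / 2) / √t * exp (-‖z‖ ^ 2 / (16 * t)) := by
    rintro s ⟨hs₀, hsh⟩
    have hz : ‖z‖ ≤ ‖z + s • v‖ + √t := by
      calc ‖z‖ = ‖(z + s • v) - s • v‖ := by rw [add_sub_cancel_right]
        _ ≤ ‖z + s • v‖ + ‖s • v‖ := norm_sub_le _ _
        _ ≤ ‖z + s • v‖ + √t := by
          rw [norm_smul, norm_of_nonneg hs₀]
          gcongr
          nlinarith [norm_nonneg v]
    rw [norm_eq_abs]
    refine (abs_heatKernel_mul_inner_le ht _ v hv).trans ?_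
    calc _ ≤ (4 * π * t) ^ (-(N : ℝ) / 2) / √t * (exp (1 / 8) * exp (-‖z‖ ^ 2 / (16 * t))) := by
          gcongr; exact exp_neg_sq_div_le_of_le_add_sqrt (norm_nonneg z) hz ht
      _ = _ := by ring
  have := norm_image_sub_le_of_norm_deriv_le_segment'
    (fun s _ ↦ (hasDerivAt_heatKernel_add_smul z v s ht.ne').hasDerivWithinAt) hderiv_le h
    (right_mem_Icc.mpr hh₀)
  simpa [norm_eq_abs, mul_comm] using this

end HeatKernel

-- No differentiability is assumed: where `g` is not differentiable, `fderiv` is `0`.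
theorem norm_fderiv_apply_le_of_norm_sub_le {E F : Type*} [NormedAddCommGroup E]
    [NormedSpace ℝ E] [NormedAddCommGroup F] [NormedSpace ℝ F] {g : E → F} {x v : E} {δ B : ℝ}
    (hδ : 0 < δ) (hB : ∀ h ∈ Ioc 0 δ, ‖g (x + h • v) - g x‖ ≤ h * B) :
    ‖fderiv ℝ g x v‖ ≤ B := by
  by_cases hg : DifferentiableAt ℝ g x
  · have hline : HasDerivAt (fun h : ℝ ↦ g (x + h • v)) (fderiv ℝ g x v) 0 := by
      have hx : HasFDerivAt g (fderiv ℝ g x) (x + (0 : ℝ) • v) := by simpa using hg.hasFDerivAt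
      have hv : HasDerivAt (fun h : ℝ ↦ x + h • v) v 0 := by
        simpa using ((hasDerivAt_id (0 : ℝ)).smul_const v).const_add x
      exact hx.comp_hasDerivAt 0 hv
    have hslope : Tendsto (slope (fun h : ℝ ↦ g (x + h • v)) 0) (𝓝[>] 0) (𝓝 (fderiv ℝ g x v)) :=
      hline.tendsto_slope_zero_right.congr fun h ↦ by simp [slope_def_module]
    refine le_of_tendsto hslope.norm ?_
    filter_upwards [Ioc_mem_nhdsGT hδ] with h hh
    rw [slope_def_module, norm_smul, sub_zero, zero_smul, add_zero, norm_inv,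
      norm_of_nonneg hh.1.le, inv_mul_le_iff₀ hh.1]
    exact hB h hh
  · rw [fderiv_zero_of_not_differentiableAt hg, zero_apply, norm_zero]
    exact nonneg_of_mul_nonneg_right ((norm_nonneg _).trans (hB δ ⟨hδ, le_rfl⟩)) hδ

section HeatSemigroup

variable {N : ℕ} {t : ℝ} {F : Type*} [NormedAddCommGroup F] [NormedSpace ℝ F] {f : Euc N → F}

theorem integrable_heatKernel_sub_smul (ht : 0 < t) (hf : AEStronglyMeasurable f)
    (hgauss : ∀ x, ∫⁻ y, ENNReal.ofReal (exp (-‖x - y‖ ^ 2 / (16 * t))) * ‖f y‖ₑ ≠ ⊤)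
    (x : Euc N) : Integrable (fun y ↦ heatKernel N t (x - y) • f y) := by
  refine ⟨((continuous_heatKernel N t).comp (continuous_sub_left x)).aestronglyMeasurable.smul hf,
    ?_⟩
  calc ∫⁻ y, ‖heatKernel N t (x - y) • f y‖ₑ
      ≤ ∫⁻ y, ENNReal.ofReal ((4 * π * t) ^ (-(N : ℝ) / 2)) *
          (ENNReal.ofReal (exp (-‖x - y‖ ^ 2 / (16 * t))) * ‖f y‖ₑ) := by
        refine lintegral_mono fun y ↦ ?_
        rw [enorm_smul, ← mul_assoc, ← ENNReal.ofReal_mul (by positivity),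
          Real.enorm_of_nonneg (heatKernel_nonneg ht.le _)]
        gcongr
        exact heatKernel_le ht _
    _ < ⊤ := by
        rw [lintegral_const_mul' _ _ ENNReal.ofReal_ne_top]
        exact ENNReal.mul_lt_top ENNReal.ofReal_lt_top (hgauss x).lt_top

theorem norm_pderiv_heatSemigroup_le (ht : 0 < t) (hf : AEStronglyMeasurable f) {L : ℝ≥0∞}
    (hL : L ≠ ⊤) (hgauss : ∀ x, ∫⁻ y, ENNReal.ofReal (exp (-‖x - y‖ ^ 2 / (16 * t))) * ‖f y‖ₑ ≤ L)
    (i : Fin N) (x : Euc N) :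
    ‖pderiv' N i (heatSemigroup N t f) x‖ ≤
      exp (1 / 8) * (4 * π * t) ^ (-(N : ℝ) / 2) / √t * L.toReal := by
  set K := exp (1 / 8) * (4 * π * t) ^ (-(N : ℝ) / 2) / √t
  set e : Euc N := EuclideanSpace.single i 1
  have he : ‖e‖ ≤ 1 := by simp [e]
  have hint := integrable_heatKernel_sub_smul ht hf fun x ↦ ((hgauss x).trans_lt hL.lt_top).ne
  refine norm_fderiv_apply_le_of_norm_sub_le (sqrt_pos.mpr ht) fun h ⟨hh₀, hh⟩ ↦ ?_
  have hdiff : heatSemigroup N t f (x + h • e) - heatSemigroup N t f x =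
      ∫ y, (heatKernel N t (x - y + h • e) - heatKernel N t (x - y)) • f y := by
    simp only [heatSemigroup, ← integral_sub (hint _) (hint _), sub_smul]
    simp only [add_sub_right_comm]
  have henorm : ‖heatSemigroup N t f (x + h • e) - heatSemigroup N t f x‖ₑ ≤
      ENNReal.ofReal (h * K) * L := by
    rw [hdiff]
    refine (enorm_integral_le_lintegral_enorm _).trans ?_
    calc ∫⁻ y, ‖(heatKernel N t (x - y + h • e) - heatKernel N t (x - y)) • f y‖ₑ
        ≤ ∫⁻ y, ENNReal.ofReal (h * K) *
            (ENNReal.ofReal (exp (-‖x - y‖ ^ 2 / (16 * t))) * ‖f y‖ₑ) := by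
          refine lintegral_mono fun y ↦ ?_
          rw [enorm_smul, Real.enorm_eq_ofReal_abs, ← mul_assoc,
            ← ENNReal.ofReal_mul (by positivity)]
          gcongr
          exact (abs_heatKernel_add_smul_sub_le ht (x - y) e he hh₀.le hh).trans_eq
            (mul_assoc _ _ _).symm
      _ ≤ ENNReal.ofReal (h * K) * L := by
          rw [lintegral_const_mul' _ _ ENNReal.ofReal_ne_top]
          gcongr
          exact hgauss x
  calc _ = ‖heatSemigroup N t f (x + h • e) - heatSemigroup N t f x‖ₑ.toReal :=
        (toReal_enorm _).symm
    _ ≤ (ENNReal.ofReal (h * K) * L).toReal := ENNReal.toReal_mono (by finiteness) henorm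
    _ = h * (K * L.toReal) := by
        rw [ENNReal.toReal_mul, ENNReal.toReal_ofReal (by positivity), mul_assoc]

def heatGradMorreyConst (N : ℕ) (p p₁ : ℝ≥0∞) : ℝ :=
  exp (1 / 8) * (4 * π) ^ (-(N : ℝ) / 2) * 16 ^ ((N - N / p.toReal) / 2) *
    dyadicGaussSum (N - N / p.toReal) *
      (volume (ball (0 : Euc N) 1) ^ (1 - 1 / p₁.toReal)).toReal

theorem heatGradMorreyConst_pos (N : ℕ) (p p₁ : ℝ≥0∞) : 0 < heatGradMorreyConst N p p₁ := by
  have hS := dyadicGaussSum_pos (N - N / p.toReal)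
  have hV := ENNReal.toReal_pos
    (ENNReal.rpow_pos (measure_ball_pos volume (0 : Euc N) one_pos) measure_ball_lt_top.ne).ne'
    (ENNReal.rpow_ne_top_of_nonneg' (measure_ball_pos _ _ one_pos) measure_ball_lt_top.ne
      (y := 1 - 1 / p₁.toReal))
  unfold heatGradMorreyConst
  positivity

theorem norm_pderiv_heatSemigroup_le_morreyNorm {p p₁ : ℝ≥0∞} (hp₁ : 1 ≤ p₁)
    (hf : AEStronglyMeasurable f) (hM : morreyNorm N p p₁ f ≠ ⊤) (ht : 0 < t) (i : Fin N)
    (x : Euc N) :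
    ‖pderiv' N i (heatSemigroup N t f) x‖ ≤
      heatGradMorreyConst N p p₁ * t ^ (-(N : ℝ) / (2 * p.toReal) - 1 / 2) *
        (morreyNorm N p p₁ f).toReal := by
  set a : ℝ := N - N / p.toReal with ha
  have hS := dyadicGaussSum_pos a
  have hV : volume (ball (0 : Euc N) 1) ^ (1 - 1 / p₁.toReal) ≠ ⊤ :=
    ENNReal.rpow_ne_top_of_nonneg' (measure_ball_pos _ _ one_pos) measure_ball_lt_top.ne
  refine (norm_pderiv_heatSemigroup_le ht hf (by finiteness [ENNReal.mul_ne_top hV hM])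
    (fun y ↦ lintegral_exp_neg_sq_div_mul_le_morreyNorm hp₁ hf y (by positivity : 0 < 16 * t))
    i x).trans_eq ?_
  have htpow : t ^ (-(N : ℝ) / 2) * t ^ (a / 2) / t ^ (1 / 2 : ℝ) =
      t ^ (-(N : ℝ) / (2 * p.toReal) - 1 / 2) := by
    rw [← rpow_add ht, ← rpow_sub ht, ha]
    congr 1
    ring
  rw [ENNReal.toReal_mul, ENNReal.toReal_mul, ENNReal.toReal_ofReal (by positivity),
    mul_rpow (by positivity) ht.le, mul_rpow (by positivity) ht.le, sqrt_eq_rpow, ← htpow,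
    heatGradMorreyConst]
  ring

end HeatSemigroup

theorem grad_heat_semigroup_morrey_to_Linfty_general (N : ℕ) (q q₁ : ℝ)
    (hq₁ : 1 ≤ q₁) (hq₁q : q₁ ≤ q) :
    ∃ C > (0 : ℝ), ∀ (i : Fin N) (t : ℝ), 0 < t → ∀ f : Euc N → ℝ, Measurable f →
      morreyNorm N (ENNReal.ofReal q) (ENNReal.ofReal q₁) f ≠ ⊤ →
      eLpNorm (pderiv' N i (heatSemigroup N t f)) ⊤ volume ≤
        ENNReal.ofReal (C * t ^ (-(N : ℝ) / (2 * q) - 1 / 2)) *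
          morreyNorm N (ENNReal.ofReal q) (ENNReal.ofReal q₁) f := by
  refine ⟨heatGradMorreyConst N (ENNReal.ofReal q) (ENNReal.ofReal q₁),
    heatGradMorreyConst_pos _ _ _, fun i t ht f hf hM ↦ ?_⟩
  have hpoint := norm_pderiv_heatSemigroup_le_morreyNorm (ENNReal.one_le_ofReal.mpr hq₁)
    hf.aestronglyMeasurable hM ht i
  rw [ENNReal.toReal_ofReal (by linarith)] at hpoint
  rw [eLpNorm_exponent_top]
  refine eLpNormEssSup_le_of_ae_enorm_bound (ae_of_all _ fun x ↦ ?_)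
  rw [← ofReal_norm, ← ENNReal.ofReal_toReal hM,
    ← ENNReal.ofReal_mul (mul_pos (heatGradMorreyConst_pos _ _ _) (rpow_pos_of_pos ht _)).le]
  exact ENNReal.ofReal_le_ofReal (hpoint x)

/-- **Morrey-to-`L^∞` gradient heat semigroup estimate.** For `1 ≤ q₁ ≤ q < ∞`, there is
`C > 0` depending only on `N, q, q₁` such that for every first-order derivative `∂_x`,
`‖∂_x e^{tΔ} f‖_{L^∞} ≤ C t^{−N/(2q) − 1/2} ‖f‖_{M^q_{q₁}}` for all `t > 0` and
`f ∈ M^q_{q₁}(ℝ^N)`. -/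
theorem grad_heat_semigroup_morrey_to_Linfty (N : ℕ) (hN : 1 ≤ N) (q q₁ : ℝ)
    (hq₁ : 1 ≤ q₁) (hq₁q : q₁ ≤ q) :
    ∃ C > (0 : ℝ), ∀ (i : Fin N) (t : ℝ), 0 < t → ∀ f : Euc N → ℝ, Measurable f →
      morreyNorm N (ENNReal.ofReal q) (ENNReal.ofReal q₁) f ≠ ⊤ →
      eLpNorm (pderiv' N i (heatSemigroup N t f)) ⊤ volume ≤
        ENNReal.ofReal (C * t ^ (-(N : ℝ) / (2 * q) - 1 / 2)) *
          morreyNorm N (ENNReal.ofReal q) (ENNReal.ofReal q₁) f :=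
  grad_heat_semigroup_morrey_to_Linfty_general N q q₁ hq₁ hq₁q
end
end
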